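/- Let Z = {0,1}^ℕ with ultrametrics ρ₁(x,y) = f(inf{j : x_j ≠ y_j}) and ρ₂(x,y) = g(inf{j : x_j ≠ y_j}), where f,g: ℕ → (0,∞) are strictly decreasing with limit 0. Then the entropic scale of the bimetric space (Z,ρ₁,ρ₂) satisfies s(Z,α) = g(⌊inf_{k∈ℕ}(k + (α/ln 2)·f(k))⌋), and the diametric scale satisfies s₀(Z,α) = sup_{k∈ℕ} g(k)·e^{-α f(k)}. -/

import Mathlib

open Metric MeasureTheory ENNReal Set

noncomputable def pack {Z : Type*} (ρ : Z → Z → ℝ) (B : Set Z) (ε : ℝ) : ℝ≥0∞ :=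
  ⨆ (N : Finset Z) (_ : ↑N ⊆ B ∧ (↑N : Set Z).Pairwise fun a b => ε < ρ a b),
    (N.card : ℝ≥0∞)

def mball {Z : Type*} (ρ : Z → Z → ℝ) (x : Z) (r : ℝ) : Set Z := {y | ρ x y ≤ r}

noncomputable def entScale {Z : Type*} (ρ₁ ρ₂ : Z → Z → ℝ) (α : ℝ) : ℝ :=
  sInf {s : ℝ | 0 < s ∧ ∀ x : Z, ∀ r : ℝ, 0 < r →
    pack ρ₂ (mball ρ₁ x r) s ≤ ENNReal.ofReal (Real.exp (α * r))}

noncomputable def diamScale {Z : Type*} (ρ₁ ρ₂ : Z → Z → ℝ) (α : ℝ) : ℝ :=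
  sInf {s : ℝ | 0 < s ∧ ∀ x : Z, ∀ r : ℝ, 0 < r →
    ∀ y ∈ mball ρ₁ x r, ∀ z ∈ mball ρ₁ x r, ρ₂ y z ≤ Real.exp (α * r) * s}

noncomputable def dblScale {Z : Type*} (ρ : Z → Z → ℝ) (α : ℝ) : ℝ :=
  sInf {s : ℝ | 0 < s ∧ ∀ x : Z,
    pack ρ (mball ρ x (2 * s)) s ≤ ENNReal.ofReal (Real.exp (2 * α * s))}

noncomputable def outScale {Z : Type*} (ρ : Z → Z → ℝ) (α : ℝ) : ℝ :=
  sInf {t : ℝ | ∃ γ : ℝ, 0 < γ ∧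
    t = γ + (1 / α) * Real.log (pack ρ Set.univ γ).toReal}

def IsMetric {Z : Type*} (ρ : Z → Z → ℝ) : Prop :=
  (∀ x y, ρ x y = 0 ↔ x = y) ∧ (∀ x y, ρ x y = ρ y x) ∧
    ∀ x y z, ρ x z ≤ ρ x y + ρ y z

def IsUltrametric' {Z : Type*} (ρ : Z → Z → ℝ) : Prop :=
  ∀ x y z, ρ x z ≤ max (ρ x y) (ρ y z)

def MetricPrivate {Z : Type*} [MeasurableSpace Z] (ρ₁ : Z → Z → ℝ) (α : ℝ)
    (M : Z → Measure Z) : Prop :=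
  (∀ x, IsProbabilityMeasure (M x)) ∧
    ∀ x x' : Z, ∀ S : Set Z,
      M x S ≤ ENNReal.ofReal (Real.exp (α * ρ₁ x x')) * M x' S

noncomputable def accuracy {Z : Type*} [MeasurableSpace Z] (ρ₁ ρ₂ : Z → Z → ℝ)
    (α : ℝ) : ℝ≥0∞ :=
  ⨅ (M : Z → Measure Z) (_ : MetricPrivate ρ₁ α M),
    ⨆ x : Z, ∫⁻ y, ENNReal.ofReal (ρ₂ y x) ∂(M x)

noncomputable def dEntScale (Z : Type*) [MetricSpace Z] (α : ℝ) : ℝ :=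
  entScale (fun a b : Z => dist a b) (fun a b : Z => dist a b) α

open Classical in
noncomputable def seqMetric (f : ℕ → ℝ) (x y : ℕ → Bool) : ℝ :=
  if x = y then 0 else f (sInf {j : ℕ | x j ≠ y j})


/-!
The `ρ₁`-ball of radius `r` about `x` is the cylinder of sequences agreeing with `x` before the
least index `k` with `f k ≤ r`, and two sequences are `s`-separated in `ρ₂` iff they differ before
the least index `n` with `g n ≤ s`. Hence the largest `s`-packing of that ball has `2 ^ (n - k)`
elements and its `ρ₂`-diameter is `g k`. For a given cylinder the radius `r = f k` is the most
demanding one, so the entropic condition becomes `n ≤ k + (α / log 2) f k` for every `k`, i.e.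
`n ≤ ⌊⨅ k, k + (α / log 2) f k⌋`, and the diametric one becomes `g k ≤ e ^ (α f k) s` for every `k`.
-/

open PiNat Filter Topology

section Packing

variable {Z : Type*} {ρ : Z → Z → ℝ} {B : Set Z} {ε : ℝ}

lemma card_le_pack {N : Finset Z} (hNB : ↑N ⊆ B)
    (hN : (↑N : Set Z).Pairwise fun a b => ε < ρ a b) : (N.card : ℝ≥0∞) ≤ pack ρ B ε :=
  le_iSup₂_of_le (f := fun (N : Finset Z)
    (_ : ↑N ⊆ B ∧ (↑N : Set Z).Pairwise fun a b => ε < ρ a b) => (N.card : ℝ≥0∞))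
    N ⟨hNB, hN⟩ le_rfl

lemma pack_le {m : ℕ} (h : ∀ N : Finset Z, ↑N ⊆ B →
    (↑N : Set Z).Pairwise (fun a b => ε < ρ a b) → N.card ≤ m) : pack ρ B ε ≤ m :=
  iSup₂_le fun N hN => by exact_mod_cast h N hN.1 hN.2

end Packing

noncomputable def scaleIndex (f : ℕ → ℝ) (r : ℝ) : ℕ := sInf {k | f k ≤ r}

section ScaleIndex

variable {f : ℕ → ℝ} {r : ℝ}

lemma exists_le_of_tendsto_zero (hf0 : Tendsto f atTop (𝓝 0)) (hr : 0 < r) : ∃ k, f k ≤ r :=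
  (hf0.eventually (ge_mem_nhds hr)).exists

lemma scaleIndex_le_iff (hf : Antitone f) (hr : ∃ k, f k ≤ r) {k : ℕ} :
    scaleIndex f r ≤ k ↔ f k ≤ r :=
  ⟨fun h => (hf h).trans (Nat.sInf_mem hr), fun h => Nat.sInf_le h⟩

lemma apply_scaleIndex_le (hf : Antitone f) (hr : ∃ k, f k ≤ r) : f (scaleIndex f r) ≤ r :=
  (scaleIndex_le_iff hf hr).1 le_rfl

lemma scaleIndex_apply (hf : StrictAnti f) (k : ℕ) : scaleIndex f (f k) = k :=
  le_antisymm ((scaleIndex_le_iff hf.antitone ⟨k, le_rfl⟩).2 le_rfl)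
    (le_csInf ⟨k, le_refl (f k)⟩ fun _ hm => hf.le_iff_ge.1 hm)

end ScaleIndex

section SeqMetric

variable {f g : ℕ → ℝ}

lemma seqMetric_self (f : ℕ → ℝ) (x : ℕ → Bool) : seqMetric f x x = 0 :=
  if_pos rfl

lemma seqMetric_of_ne (f : ℕ → ℝ) {x y : ℕ → Bool} (h : x ≠ y) :
    seqMetric f x y = f (firstDiff x y) := by
  have hfirst : sInf {j | x j ≠ y j} = firstDiff x y :=
    le_antisymm (Nat.sInf_le (apply_firstDiff_ne h))
      (le_csInf ⟨_, apply_firstDiff_ne h⟩ fun _ hj => not_lt.1 fun hlt =>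
        hj (apply_eq_of_lt_firstDiff hlt))
  rw [seqMetric, if_neg h, hfirst]

lemma mball_seqMetric (hf : Antitone f) {r : ℝ} (hr0 : 0 ≤ r) (hr : ∃ k, f k ≤ r)
    (x : ℕ → Bool) : mball (seqMetric f) x r = cylinder x (scaleIndex f r) := by
  ext y
  rcases eq_or_ne y x with rfl | hne
  · simp [mball, seqMetric_self, hr0]
  · rw [mem_cylinder_iff_le_firstDiff hne, scaleIndex_le_iff hf hr, firstDiff_comm]
    show seqMetric f x y ≤ r ↔ _
    rw [seqMetric_of_ne f hne.symm]

lemma lt_seqMetric_iff (hg : Antitone g) {s : ℝ} (hs : ∃ k, g k ≤ s) {y z : ℕ → Bool}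
    (hne : y ≠ z) : s < seqMetric g y z ↔ firstDiff y z < scaleIndex g s := by
  rw [seqMetric_of_ne g hne, ← not_le, ← not_le, scaleIndex_le_iff hg hs]

lemma seqMetric_le_of_mem_cylinder (hg : Antitone g) {k : ℕ} (hgk : 0 ≤ g k)
    {x y z : ℕ → Bool} (hy : y ∈ cylinder x k) (hz : z ∈ cylinder x k) :
    seqMetric g y z ≤ g k := by
  rcases eq_or_ne y z with rfl | hne
  · rwa [seqMetric_self]
  · rw [← mem_cylinder_iff_eq.1 hz] at hy
    rw [seqMetric_of_ne g hne]
    exact hg ((mem_cylinder_iff_le_firstDiff hne k).1 hy)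

lemma seqMetric_update_not (g : ℕ → ℝ) (x : ℕ → Bool) (k : ℕ) :
    seqMetric g x (Function.update x k (!x k)) = g k := by
  have hne : x ≠ Function.update x k (!x k) := fun h => by simpa using congrFun h k
  rw [seqMetric_of_ne g hne]
  congr
  refine le_antisymm (not_lt.1 fun h => ?_)
    ((mem_cylinder_iff_le_firstDiff hne k).1
      ((mem_cylinder_comm _ _ _).1 (update_mem_cylinder x k _)))
  simpa using apply_eq_of_lt_firstDiff h

end SeqMetric

section CylinderPacking

variable {g : ℕ → ℝ} (hg : Antitone g) {s : ℝ} (hs : ∃ k, g k ≤ s)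
include hg hs

lemma pack_seqMetric_cylinder_le (x : ℕ → Bool) (k : ℕ) :
    pack (seqMetric g) (cylinder x k) s ≤ 2 ^ (scaleIndex g s - k) := by
  set n := scaleIndex g s
  refine (pack_le (m := 2 ^ (n - k)) fun N hNB hN => ?_).trans_eq (by norm_cast)
  have hinj : Set.InjOn (fun y : ℕ → Bool => fun i : Fin (n - k) => y (k + i)) N := by
    intro y hy z hz hyz
    by_contra hne
    have hyz_cyl : y ∈ cylinder z k := by rw [mem_cylinder_iff_eq.1 (hNB hz)]; exact hNB hy
    have hk := (mem_cylinder_iff_le_firstDiff hne k).1 hyz_cyl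
    have hn := (lt_seqMetric_iff hg hs hne).1 (hN hy hz hne)
    apply apply_firstDiff_ne hne
    simpa [Nat.add_sub_cancel' hk] using congrFun hyz ⟨firstDiff y z - k, by omega⟩
  simpa using Finset.card_le_card_of_injOn _ (fun _ _ => Finset.mem_univ _) hinj

lemma le_pack_seqMetric_cylinder (x : ℕ → Bool) (k : ℕ) :
    2 ^ (scaleIndex g s - k) ≤ pack (seqMetric g) (cylinder x k) s := by
  classical
  set n := scaleIndex g s
  let ψ : (Fin (n - k) → Bool) → ℕ → Bool := fun b j =>
    if h : k ≤ j ∧ j < n then b ⟨j - k, by omega⟩ else x j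
  have hψ_off : ∀ b j, ¬(k ≤ j ∧ j < n) → ψ b j = x j := fun b j h => dif_neg h
  have hψ_on : ∀ b (i : Fin (n - k)), ψ b (k + i) = b i := fun b i => by
    simp only [ψ, dif_pos (show k ≤ k + i ∧ k + i < n by omega), Nat.add_sub_cancel_left]
  have hinj : ψ.Injective := fun b b' h => funext fun i => by rw [← hψ_on b, h, hψ_on]
  have hsep : ∀ b b', ψ b ≠ ψ b' → firstDiff (ψ b) (ψ b') < n := fun b b' hne =>
    not_le.1 fun hle => apply_firstDiff_ne hne <| by
      rw [hψ_off b _ (by omega), hψ_off b' _ (by omega)]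
  calc (2 : ℝ≥0∞) ^ (n - k) = ((Finset.univ.image ψ).card : ℝ≥0∞) := by
        rw [Finset.card_image_of_injective _ hinj]; simp
    _ ≤ pack (seqMetric g) (cylinder x k) s := by
      refine card_le_pack ?_ ?_
      · simp only [Finset.coe_image, Finset.coe_univ, Set.image_univ]
        rintro _ ⟨b, rfl⟩ j hj
        exact hψ_off b j (by omega)
      · simp only [Finset.coe_image, Finset.coe_univ, Set.image_univ]
        rintro _ ⟨b, rfl⟩ _ ⟨b', rfl⟩ hne
        exact (lt_seqMetric_iff hg hs hne).2 (hsep b b' hne)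

lemma pack_seqMetric_cylinder (x : ℕ → Bool) (k : ℕ) :
    pack (seqMetric g) (cylinder x k) s = 2 ^ (scaleIndex g s - k) :=
  (pack_seqMetric_cylinder_le hg hs x k).antisymm (le_pack_seqMetric_cylinder hg hs x k)

end CylinderPacking

lemma sInf_setOf_pos_and_eq {P : ℝ → Prop} {a : ℝ} (ha : 0 < a)
    (hP : ∀ s, 0 < s → (P s ↔ a ≤ s)) : sInf {s | 0 < s ∧ P s} = a := by
  rw [← csInf_Ici (a := a)]
  congr 1
  ext s
  exact ⟨fun ⟨hs, h⟩ => (hP s hs).1 h, fun h => ⟨ha.trans_le h, (hP s (ha.trans_le h)).2 h⟩⟩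

lemma two_pow_sub_le_exp_iff {α t : ℝ} (hα : 0 ≤ α) (ht : 0 ≤ t) (n k : ℕ) :
    (2 : ℝ) ^ (n - k) ≤ Real.exp (α * t) ↔ (n : ℝ) ≤ k + α / Real.log 2 * t := by
  have hlog2 : 0 < Real.log 2 := Real.log_pos one_lt_two
  rcases le_total n k with hnk | hkn
  · rw [Nat.sub_eq_zero_of_le hnk, pow_zero]
    have : (n : ℝ) ≤ k := by exact_mod_cast hnk
    exact iff_of_true (Real.one_le_exp (by positivity)) (by nlinarith [div_nonneg hα hlog2.le])
  · rw [← Real.exp_log (by positivity : (0 : ℝ) < 2 ^ (n - k)), Real.exp_le_exp, Real.log_pow,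
      Nat.cast_sub hkn, div_mul_eq_mul_div, ← sub_le_iff_le_add', le_div_iff₀ hlog2]

lemma forall_natCast_le_iff_le_floor_iInf {ι : Type*} [Nonempty ι] {u : ι → ℝ}
    (hu : ∀ i, 0 ≤ u i) (n : ℕ) : (∀ i, (n : ℝ) ≤ u i) ↔ n ≤ ⌊⨅ i, u i⌋₊ := by
  rw [Nat.le_floor_iff (le_ciInf hu), le_ciInf_iff ⟨0, Set.forall_mem_range.2 hu⟩]

section Scales

variable {f g : ℕ → ℝ} (hf : StrictAnti f) (hfpos : ∀ k, 0 < f k)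
  (hf0 : Tendsto f atTop (𝓝 0)) (hg : Antitone g) {α : ℝ} (hα : 0 ≤ α)
include hf hfpos hf0 hg hα

lemma forall_pack_mball_le_exp_iff {s : ℝ} (hs : ∃ k, g k ≤ s) :
    (∀ x : ℕ → Bool, ∀ r : ℝ, 0 < r →
        pack (seqMetric g) (mball (seqMetric f) x r) s ≤ ENNReal.ofReal (Real.exp (α * r))) ↔
      ∀ k, (2 : ℝ) ^ (scaleIndex g s - k) ≤ Real.exp (α * f k) := by
  have hball : ∀ x r, 0 < r → pack (seqMetric g) (mball (seqMetric f) x r) s =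
      ENNReal.ofReal (2 ^ (scaleIndex g s - scaleIndex f r)) := fun x r hr => by
    rw [mball_seqMetric hf.antitone hr.le (exists_le_of_tendsto_zero hf0 hr),
      pack_seqMetric_cylinder hg hs, ENNReal.ofReal_pow zero_le_two, ENNReal.ofReal_ofNat]
  constructor
  · intro h k
    have hk := h (fun _ => false) (f k) (hfpos k)
    rwa [hball _ _ (hfpos k), scaleIndex_apply hf,
      ENNReal.ofReal_le_ofReal_iff (Real.exp_pos _).le] at hk
  · intro h x r hr
    rw [hball x r hr]
    refine ENNReal.ofReal_le_ofReal ((h _).trans (Real.exp_le_exp.2 ?_))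
    exact mul_le_mul_of_nonneg_left
      (apply_scaleIndex_le hf.antitone (exists_le_of_tendsto_zero hf0 hr)) hα

lemma forall_seqMetric_mball_le_iff (hg_nonneg : ∀ k, 0 ≤ g k) {s : ℝ} (hs : 0 ≤ s) :
    (∀ x : ℕ → Bool, ∀ r : ℝ, 0 < r → ∀ y ∈ mball (seqMetric f) x r,
        ∀ z ∈ mball (seqMetric f) x r, seqMetric g y z ≤ Real.exp (α * r) * s) ↔
      ∀ k, g k ≤ Real.exp (α * f k) * s := by
  constructor
  · intro h k
    let x : ℕ → Bool := fun _ => false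
    have hball : mball (seqMetric f) x (f k) = cylinder x k := by
      rw [mball_seqMetric hf.antitone (hfpos k).le ⟨k, le_rfl⟩, scaleIndex_apply hf]
    have hk := h x (f k) (hfpos k) x (hball ▸ self_mem_cylinder x k) _
      (hball ▸ update_mem_cylinder x k (!x k))
    rwa [seqMetric_update_not] at hk
  · intro h x r hr y hy z hz
    have hr' := exists_le_of_tendsto_zero hf0 hr
    rw [mball_seqMetric hf.antitone hr.le hr'] at hy hz
    calc seqMetric g y z ≤ g (scaleIndex f r) :=
          seqMetric_le_of_mem_cylinder hg (hg_nonneg _) hy hz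
      _ ≤ Real.exp (α * f (scaleIndex f r)) * s := h _
      _ ≤ Real.exp (α * r) * s := by
        gcongr
        exact apply_scaleIndex_le hf.antitone hr'

lemma entScale_seqMetric (hg0 : Tendsto g atTop (𝓝 0)) (hgpos : ∀ k, 0 < g k) :
    entScale (seqMetric f) (seqMetric g) α =
      g ⌊⨅ k : ℕ, ((k : ℝ) + (α / Real.log 2) * f k)⌋₊ := by
  refine sInf_setOf_pos_and_eq (hgpos _) fun s hs => ?_
  have hs' := exists_le_of_tendsto_zero hg0 hs
  refine (forall_pack_mball_le_exp_iff hf hfpos hf0 hg hα hs').trans <|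
    (forall_congr' fun k => two_pow_sub_le_exp_iff hα (hfpos k).le _ _).trans ?_
  rw [forall_natCast_le_iff_le_floor_iInf (fun k => by have := hfpos k; positivity),
    scaleIndex_le_iff hg hs']

lemma diamScale_seqMetric (hgpos : ∀ k, 0 < g k) :
    diamScale (seqMetric f) (seqMetric g) α = ⨆ k : ℕ, g k * Real.exp (-(α * f k)) := by
  have hbdd : BddAbove (Set.range fun k => g k * Real.exp (-(α * f k))) :=
    ⟨g 0, Set.forall_mem_range.2 fun k =>
      (mul_le_of_le_one_right (hgpos k).le (Real.exp_le_one_iff.2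
        (neg_nonpos.2 (mul_nonneg hα (hfpos k).le)))).trans (hg (Nat.zero_le k))⟩
  refine sInf_setOf_pos_and_eq
    ((mul_pos (hgpos 0) (Real.exp_pos _)).trans_le (le_ciSup hbdd 0)) fun s hs => ?_
  rw [forall_seqMetric_mball_le_iff hf hfpos hf0 hg hα (fun k => (hgpos k).le) hs.le,
    ciSup_le_iff hbdd]
  refine forall_congr' fun k => ?_
  rw [Real.exp_neg, ← div_eq_mul_inv, div_le_iff₀ (Real.exp_pos _), mul_comm s]

end Scales

theorem stmt18 (f g : ℕ → ℝ) (hfpos : ∀ k, 0 < f k) (hgpos : ∀ k, 0 < g k)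
    (hf : StrictAnti f) (hg : StrictAnti g)
    (hf0 : Filter.Tendsto f Filter.atTop (nhds 0))
    (hg0 : Filter.Tendsto g Filter.atTop (nhds 0))
    (α : ℝ) (hα : 0 < α) :
    entScale (seqMetric f) (seqMetric g) α =
        g (⌊⨅ k : ℕ, ((k : ℝ) + (α / Real.log 2) * f k)⌋₊) ∧
      diamScale (seqMetric f) (seqMetric g) α =
        ⨆ k : ℕ, g k * Real.exp (-(α * f k)) :=
  ⟨entScale_seqMetric hf hfpos hf0 hg.antitone hα.le hg0 hgpos,
    diamScale_seqMetric hf hfpos hf0 hg.antitone hα.le hgpos⟩
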